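/- Let P : Cᵒᵖ → Pos be a primary doctrine, X an object of C and φ ∈ P(X). For any primary doctrine R : Dᵒᵖ → Pos, let PD(P_(X,φ), R) be the category of primary morphisms P_(X,φ) → R with 2-cells as arrows, and let PD_(X,φ)(P, R) be the category whose objects are pairs ((G,𝔤), c) of a primary morphism (G,𝔤) : P → R and a morphism c : t_D → G(X) such that ⊤ ≤ R(c)(𝔤_X(φ)) in R(t_D), and whose arrows ((G,𝔤),c) → ((H,𝔥),d) are 2-cells θ : (G,𝔤) → (H,𝔥) such that θ_X ∘ c = d. Then the functor PD(P_(X,φ), R) → PD_(X,φ)(P, R) induced by precomposition with (F_X, 𝔣) — sending (K,𝔨) to ((K,𝔨)∘(F_X,𝔣), K(id_X)) and ξ to the whiskering ξ_{F_X} — is an equivalence of categories. -/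

import Mathlib

open CategoryTheory CategoryTheory.Limits

universe w w' v u v' u' w'' v'' u''

section CoKl

variable (C : Type u) [Category.{v} C] [HasFiniteProducts C]

/-- The coKleisli category of the reader comonad `X × -` on `C`. -/
def CoKl (X : C) : Type u := C

variable {C}

/-- Regard an object of `C` as an object of the coKleisli category `CoKl C X`. -/
def CoKl.mk (X A : C) : CoKl C X := A

noncomputable instance CoKl.category (X : C) : Category.{v} (CoKl C X) where
  Hom A B := (X ⨯ (A : C)) ⟶ (B : C)
  id A := (prod.snd : X ⨯ (A : C) ⟶ (A : C))
  comp {A B D} f g := prod.lift prod.fst f ≫ g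
  id_comp f := by
    exact (by intros; simp : ∀ {A' B' : C} (f : X ⨯ A' ⟶ B'), prod.lift prod.fst prod.snd ≫ f = f) f
  comp_id f := by
    exact (by intros; rw [prod.lift_snd] : ∀ {A' B' : C} (f : X ⨯ A' ⟶ B'), prod.lift prod.fst f ≫ prod.snd = f) f
  assoc {A B D E} f g h := by
    show prod.lift prod.fst (prod.lift prod.fst f ≫ g) ≫ h
      = prod.lift prod.fst f ≫ (prod.lift prod.fst g ≫ h)
    exact (by intro A' B' D' E' f g h; rw [← Category.assoc, prod.comp_lift, prod.lift_fst] :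
      ∀ {A' B' D' E' : C} (f : X ⨯ A' ⟶ B') (g : X ⨯ B' ⟶ D') (h : X ⨯ D' ⟶ E'),
        prod.lift prod.fst (prod.lift prod.fst f ≫ g) ≫ h
          = prod.lift prod.fst f ≫ (prod.lift prod.fst g ≫ h)) f g h

/-- The cofree functor `F_X : C ⥤ CoKl C X`. -/
noncomputable def FX (X : C) : C ⥤ CoKl C X where
  obj A := CoKl.mk X A
  map {A B} f := (prod.snd ≫ f : X ⨯ A ⟶ B)
  map_id A := by simp; rfl
  map_comp {A B D} f g := by
    show prod.snd ≫ f ≫ g = prod.lift prod.fst (prod.snd ≫ f) ≫ (prod.snd ≫ g)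
    exact (by intros; rw [prod.lift_snd_assoc, Category.assoc] : ∀ {A' B' D' : C} (f : A' ⟶ B') (g : B' ⟶ D'),
      prod.snd ≫ f ≫ g = prod.lift (prod.fst : X ⨯ A' ⟶ X) (prod.snd ≫ f) ≫ (prod.snd ≫ g)) f g

variable (X : C)

/-- The terminal object of `C` is terminal in `CoKl C X`. -/
noncomputable def CoKl.isTerminal : IsTerminal (CoKl.mk X (⊤_ C)) :=
  IsTerminal.ofUniqueHom
    (fun A => (terminal.from (X ⨯ (A : C)) : X ⨯ (A : C) ⟶ (⊤_ C)))
    (fun A m => terminal.hom_ext _ _)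

/-- The binary fan on `A ⨯ B` in `CoKl C X` with the coKleisli projections. -/
noncomputable def CoKl.binaryFan (A B : C) : BinaryFan (CoKl.mk X A) (CoKl.mk X B) :=
  BinaryFan.mk
    (show CoKl.mk X (A ⨯ B) ⟶ CoKl.mk X A from (prod.snd ≫ prod.fst : X ⨯ (A ⨯ B) ⟶ A))
    (show CoKl.mk X (A ⨯ B) ⟶ CoKl.mk X B from (prod.snd ≫ prod.snd : X ⨯ (A ⨯ B) ⟶ B))

/-- `A ⨯ B` with the coKleisli projections is a product of `A` and `B` in `CoKl C X`. -/
noncomputable def CoKl.binaryFanIsLimit (A B : C) : IsLimit (CoKl.binaryFan X A B) :=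
  BinaryFan.isLimitMk
    (fun s =>
      (show (X ⨯ (s.pt : C)) ⟶ (A ⨯ B : C) from
        prod.lift (show (X ⨯ (s.pt : C)) ⟶ A from s.fst) (show (X ⨯ (s.pt : C)) ⟶ B from s.snd)))
    (fun s => by
      show prod.lift prod.fst (prod.lift _ _) ≫ (prod.snd ≫ prod.fst) = _
      exact (by intros; rw [prod.lift_snd_assoc, prod.lift_fst] : ∀ {P' : C} (a : X ⨯ P' ⟶ A) (b : X ⨯ P' ⟶ B),
        prod.lift prod.fst (prod.lift a b) ≫ prod.snd ≫ prod.fst = a) _ _)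
    (fun s => by
      show prod.lift prod.fst (prod.lift _ _) ≫ (prod.snd ≫ prod.snd) = _
      exact (by intros; rw [prod.lift_snd_assoc, prod.lift_snd] : ∀ {P' : C} (a : X ⨯ P' ⟶ A) (b : X ⨯ P' ⟶ B),
        prod.lift prod.fst (prod.lift a b) ≫ prod.snd ≫ prod.snd = b) _ _)
    (fun s m h₁ h₂ => by
      have e₁ : (show (X ⨯ (s.pt : C)) ⟶ A from s.fst)
          = prod.lift prod.fst m ≫ (prod.snd ≫ prod.fst) := h₁.symm
      have e₂ : (show (X ⨯ (s.pt : C)) ⟶ B from s.snd)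
          = prod.lift prod.fst m ≫ (prod.snd ≫ prod.snd) := h₂.symm
      show (m : (X ⨯ (s.pt : C)) ⟶ (A ⨯ B : C)) = prod.lift _ _
      apply Limits.prod.hom_ext
      · rw [prod.lift_fst, e₁]
        exact (by intros; rw [prod.lift_snd_assoc] : ∀ {P' : C} (m : X ⨯ P' ⟶ A ⨯ B),
          m ≫ prod.fst = prod.lift prod.fst m ≫ prod.snd ≫ prod.fst) m
      · rw [prod.lift_snd, e₂]
        exact (by intros; rw [prod.lift_snd_assoc] : ∀ {P' : C} (m : X ⨯ P' ⟶ A ⨯ B),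
          m ≫ prod.snd = prod.lift prod.fst m ≫ prod.snd ≫ prod.snd) m)

noncomputable instance : HasTerminal (CoKl C X) := (CoKl.isTerminal X).hasTerminal

noncomputable instance (A B : CoKl C X) : HasLimit (pair A B) :=
  HasLimit.mk ⟨_, CoKl.binaryFanIsLimit X (A : C) (B : C)⟩

noncomputable instance : HasBinaryProducts (CoKl C X) :=
  { has_limit := fun F => hasLimit_of_iso (diagramIsoPair F).symm }

noncomputable instance : HasFiniteProducts (CoKl C X) :=
  hasFiniteProducts_of_has_binary_and_terminal

noncomputable instance (A B : C) : PreservesLimit (pair A B) (FX X) :=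
  preservesLimit_of_preserves_limit_cone (prodIsProd A B)
    ((isLimitMapConeBinaryFanEquiv (FX X) prod.fst prod.snd).symm
      (CoKl.binaryFanIsLimit X A B))

noncomputable instance : PreservesLimitsOfShape (Discrete WalkingPair) (FX X) where
  preservesLimit {K} := preservesLimit_of_iso_diagram (FX X) (diagramIsoPair K).symm

noncomputable instance : PreservesLimit (Functor.empty.{0} C) (FX X) :=
  preservesLimit_of_preserves_limit_cone terminalIsTerminal
    ((isLimitMapConeEmptyConeEquiv (FX X) (⊤_ C)).symm (CoKl.isTerminal X))

noncomputable instance : PreservesLimitsOfShape (Discrete PEmpty.{1}) (FX X) :=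
  preservesLimitsOfShape_pempty_of_preservesTerminal _

noncomputable instance : PreservesFiniteProducts (FX X) :=
  PreservesFiniteProducts.of_preserves_binary_and_terminal (FX X)

end CoKl

/-- A primary doctrine. -/
structure PrimaryDoctrine (C : Type u) [Category.{v} C] where
  obj : C → Type w
  [sl : ∀ A, SemilatticeInf (obj A)]
  [tp : ∀ A, OrderTop (obj A)]
  map : ∀ {A B : C}, (A ⟶ B) → obj B → obj A
  map_id : ∀ (A : C) (α : obj A), map (𝟙 A) α = α
  map_comp : ∀ {A B D : C} (f : A ⟶ B) (g : B ⟶ D) (α : obj D),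
      map (f ≫ g) α = map f (map g α)
  map_inf : ∀ {A B : C} (f : A ⟶ B) (α β : obj B), map f (α ⊓ β) = map f α ⊓ map f β
  map_top : ∀ {A B : C} (f : A ⟶ B), map f (⊤ : obj B) = ⊤

attribute [instance] PrimaryDoctrine.sl PrimaryDoctrine.tp

namespace PrimaryDoctrine

variable {C : Type u} [Category.{v} C]

theorem map_mono (P : PrimaryDoctrine.{w} C) {A B : C} (f : A ⟶ B) : Monotone (P.map f) := by
  intro a b h
  have h' : a ⊓ b = a := inf_eq_left.mpr h
  calc P.map f a = P.map f a ⊓ P.map f b := by rw [← P.map_inf, h']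
  _ ≤ P.map f b := inf_le_right

variable [HasFiniteProducts C]

/-- `𝔣_A(α) = P(pr₁)(φ) ⊓ P(pr₂)(α)`. -/
noncomputable def frak (P : PrimaryDoctrine.{w} C) {X : C} (φ : P.obj X) (A : C)
    (α : P.obj A) : P.obj (X ⨯ A) :=
  P.map prod.fst φ ⊓ P.map prod.snd α

theorem mem_fiber_reindex (P : PrimaryDoctrine.{w} C) {X : C} (φ : P.obj X) {A B : C}
    (g : (X ⨯ A : C) ⟶ B) {β : P.obj (X ⨯ B)} (hβ : β ≤ P.map prod.fst φ) :
    P.map (prod.lift prod.fst g) β ≤ P.map prod.fst φ := by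
  calc P.map (prod.lift prod.fst g) β
      ≤ P.map (prod.lift prod.fst g) (P.map prod.fst φ) := P.map_mono _ hβ
    _ = P.map (prod.lift prod.fst g ≫ prod.fst) φ := (P.map_comp _ _ _).symm
    _ = P.map prod.fst φ := by rw [prod.lift_fst]

theorem map_fiber_top (P : PrimaryDoctrine.{w} C) {X : C} (φ : P.obj X) {A B : C}
    (g : (X ⨯ A : C) ⟶ B) :
    P.map (prod.lift prod.fst g) (P.map prod.fst φ) = P.map prod.fst φ := by
  rw [← P.map_comp, prod.lift_fst]

end PrimaryDoctrine

section Pxphi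

variable {C : Type u} [Category.{v} C] [HasFiniteProducts C]
  (P : PrimaryDoctrine.{w} C) (X : C) (φ : P.obj X)

/-- The fiber of `P_(X,φ)` over `A`: the downset `{α ∈ P(X ⨯ A) | α ≤ P(pr₁)(φ)}`. -/
def DFib (A : CoKl C X) : Type w :=
  {α : P.obj (X ⨯ (A : C)) // α ≤ P.map prod.fst φ}

noncomputable instance (A : CoKl C X) : SemilatticeInf (DFib P X φ A) :=
  Subtype.semilatticeInf (fun _ _ hx _ => le_trans inf_le_left hx)

noncomputable instance (A : CoKl C X) : OrderTop (DFib P X φ A) where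
  top := ⟨P.map prod.fst φ, le_rfl⟩
  le_top a := a.2

/-- The primary doctrine `P_(X,φ)` on the coKleisli category `CoKl C X`. -/
noncomputable def pXphi : PrimaryDoctrine.{w} (CoKl C X) where
  obj A := DFib P X φ A
  map {A B} g α := ⟨P.map (prod.lift prod.fst g) α.1, P.mem_fiber_reindex φ g α.2⟩
  map_id A α := Subtype.ext (by
    show P.map (prod.lift prod.fst prod.snd) α.1 = α.1
    exact (by intro A' a; rw [prod.lift_fst_snd, P.map_id] :
      ∀ {A' : C} (a : P.obj (X ⨯ A')), P.map (prod.lift prod.fst prod.snd) a = a) α.1)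
  map_comp {A B D} g h α := Subtype.ext (by
    show P.map (prod.lift prod.fst (prod.lift prod.fst g ≫ h)) α.1
      = P.map (prod.lift prod.fst g) (P.map (prod.lift prod.fst h) α.1)
    rw [← P.map_comp]
    congr 1
    exact (by intro A' B' D' g h; rw [prod.comp_lift, prod.lift_fst] :
      ∀ {A' B' D' : C} (g : X ⨯ A' ⟶ B') (h : X ⨯ B' ⟶ D'),
        prod.lift prod.fst (prod.lift prod.fst g ≫ h)
          = prod.lift prod.fst g ≫ prod.lift prod.fst h) g h)
  map_inf {A B} g α β := Subtype.ext (P.map_inf _ _ _)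
  map_top {A B} g := Subtype.ext (P.map_fiber_top φ g)

end Pxphi

/-- A primary morphism of primary doctrines: a finite-product-preserving functor between
the base categories together with a natural transformation whose components preserve
binary meets and top. -/
structure PrimaryHom {C : Type u} [Category.{v} C] {D : Type u'} [Category.{v'} D]
    [HasFiniteProducts C] [HasFiniteProducts D]
    (P : PrimaryDoctrine.{w} C) (R : PrimaryDoctrine.{w'} D) where
  G : C ⥤ D
  pres : PreservesFiniteProducts G
  app : ∀ A : C, P.obj A → R.obj (G.obj A)
  naturality : ∀ {A B : C} (f : A ⟶ B) (α : P.obj B),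
      app A (P.map f α) = R.map (G.map f) (app B α)
  app_inf : ∀ (A : C) (α β : P.obj A), app A (α ⊓ β) = app A α ⊓ app A β
  app_top : ∀ A : C, app A (⊤ : P.obj A) = ⊤

section Homs

variable {C : Type u} [Category.{v} C] {D : Type u'} [Category.{v'} D]
  [HasFiniteProducts C] [HasFiniteProducts D]
  {P : PrimaryDoctrine.{w} C} {R : PrimaryDoctrine.{w'} D}

/-- The category `PD(P, R)` of primary morphisms `P ⟶ R` and 2-cells between them. -/
noncomputable instance PrimaryHom.category : Category.{max u v'} (PrimaryHom P R) where
  Hom M N := {θ : M.G ⟶ N.G // ∀ (A : C) (α : P.obj A),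
    M.app A α ≤ R.map (θ.app A) (N.app A α)}
  id M := ⟨𝟙 M.G, fun A α => by rw [NatTrans.id_app, R.map_id]⟩
  comp {M N O} θ η := ⟨θ.1 ≫ η.1, fun A α => by
    rw [NatTrans.comp_app, R.map_comp]
    exact le_trans (θ.2 A α) (R.map_mono _ (η.2 A α))⟩
  id_comp θ := Subtype.ext (Category.id_comp θ.1)
  comp_id θ := Subtype.ext (Category.comp_id θ.1)
  assoc θ η ζ := Subtype.ext (Category.assoc θ.1 η.1 ζ.1)

end Homs

section Pointed

variable {C : Type u} [Category.{v} C] {D : Type u'} [Category.{v'} D]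
  [HasFiniteProducts C] [HasFiniteProducts D]

/-- An object of the category `PD_(X,φ)(P, R)`: a primary morphism `(G, 𝔤) : P ⟶ R`
together with a constant `c : t_D ⟶ G(X)` such that `⊤ ≤ R(c)(𝔤_X(φ))`. -/
structure PointedHom (P : PrimaryDoctrine.{w} C) (R : PrimaryDoctrine.{w'} D)
    (X : C) (φ : P.obj X) where
  M : PrimaryHom P R
  c : (⊤_ D) ⟶ M.G.obj X
  hc : (⊤ : R.obj (⊤_ D)) ≤ R.map c (M.app X φ)

variable {P : PrimaryDoctrine.{w} C} {R : PrimaryDoctrine.{w'} D} {X : C} {φ : P.obj X}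

/-- The category `PD_(X,φ)(P, R)`: morphisms are 2-cells preserving the constants. -/
noncomputable instance PointedHom.category : Category.{max u v'} (PointedHom P R X φ) where
  Hom S T := {θ : S.M.G ⟶ T.M.G //
    (∀ (A : C) (α : P.obj A), S.M.app A α ≤ R.map (θ.app A) (T.M.app A α)) ∧
    S.c ≫ θ.app X = T.c}
  id S := ⟨𝟙 S.M.G, ⟨fun A α => by rw [NatTrans.id_app, R.map_id], by simp⟩⟩
  comp {S T U} θ η := ⟨θ.1 ≫ η.1,
    ⟨fun A α => by
      rw [NatTrans.comp_app, R.map_comp]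
      exact le_trans (θ.2.1 A α) (R.map_mono _ (η.2.1 A α)),
      by rw [NatTrans.comp_app, ← Category.assoc, θ.2.2, η.2.2]⟩⟩
  id_comp θ := Subtype.ext (Category.id_comp θ.1)
  comp_id θ := Subtype.ext (Category.comp_id θ.1)
  assoc θ η ζ := Subtype.ext (Category.assoc θ.1 η.1 ζ.1)

end Pointed

section Precomp

variable {C : Type u} [Category.{v} C] [HasFiniteProducts C]
  (P : PrimaryDoctrine.{w} C) (X : C) (φ : P.obj X)

/-- The universal arrow `(F_X, 𝔣) : P ⟶ P_(X,φ)` as a primary morphism. -/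
noncomputable def FXhom : PrimaryHom P (pXphi P X φ) where
  G := FX X
  pres := inferInstance
  app A α := ⟨P.frak φ A α, inf_le_left⟩
  naturality {A B} f α := Subtype.ext (by
    show P.frak φ A (P.map f α) = P.map (prod.lift prod.fst (prod.snd ≫ f)) (P.frak φ B α)
    unfold PrimaryDoctrine.frak
    simp only [P.map_inf, ← P.map_comp, prod.lift_fst, prod.lift_snd])
  app_inf A α β := Subtype.ext (by
    show P.frak φ A (α ⊓ β) = P.frak φ A α ⊓ P.frak φ A β
    unfold PrimaryDoctrine.frak
    rw [P.map_inf]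
    rw [inf_inf_distrib_left])
  app_top A := Subtype.ext (by
    show P.frak φ A (⊤ : P.obj A) = P.map prod.fst φ
    unfold PrimaryDoctrine.frak
    rw [P.map_top, inf_top_eq])

variable {D : Type u'} [Category.{v'} D] [HasFiniteProducts D]
  (R : PrimaryDoctrine.{w'} D)

/-- Composition of primary morphisms. -/
noncomputable def PrimaryHom.compHom {E : Type u''} [Category.{v''} E] [HasFiniteProducts E]
    {Q : PrimaryDoctrine.{w''} E}
    {P : PrimaryDoctrine.{w} C} {R : PrimaryDoctrine.{w'} D}
    (M : PrimaryHom P Q) (N : PrimaryHom Q R) : PrimaryHom P R where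
  G := M.G ⋙ N.G
  pres := by
    have := M.pres
    have := N.pres
    infer_instance
  app A α := N.app (M.G.obj A) (M.app A α)
  naturality {A B} f α := by
    rw [M.naturality, N.naturality]
    rfl
  app_inf A α β := by rw [M.app_inf, N.app_inf]
  app_top A := by rw [M.app_top, N.app_top]

/-- The coKleisli constant `id_X : t ⇝ X`. -/
noncomputable def idXc (X : C) : CoKl.mk X (⊤_ C) ⟶ CoKl.mk X X :=
  (prod.fst : X ⨯ (⊤_ C) ⟶ X)

/-- The image of the terminal object of `CoKl C X` under `K` is terminal. -/
noncomputable def termObj (K : PrimaryHom (pXphi P X φ) R) :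
    IsTerminal (K.G.obj (CoKl.mk X (⊤_ C))) := by
  have := K.pres
  exact (CoKl.isTerminal X).isTerminalObj K.G

/-- The constant associated with the precomposition of `K` with `(F_X, 𝔣)`:
the composite of the canonical identification `t_D ≅ K(t)` with `K(id_X)`. -/
noncomputable def constOf (K : PrimaryHom (pXphi P X φ) R) : (⊤_ D) ⟶ K.G.obj (CoKl.mk X X) :=
  (termObj P X φ R K).from (⊤_ D) ≫ K.G.map (idXc X)

/-- Reindexing `𝔣_X(φ)` along `id_X : t ⇝ X` yields the top element. -/
theorem reindex_frak_top :
    (pXphi P X φ).map (idXc X) ((FXhom P X φ).app X φ) = ⊤ := by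
  apply Subtype.ext
  show P.map (prod.lift prod.fst (prod.fst : X ⨯ (⊤_ C) ⟶ X)) (P.frak φ X φ)
    = P.map prod.fst φ
  unfold PrimaryDoctrine.frak
  rw [P.map_inf, ← P.map_comp, ← P.map_comp, prod.lift_fst, prod.lift_snd, inf_idem]

/-- The functor `PD(P_(X,φ), R) ⥤ PD_(X,φ)(P, R)` induced by precomposition with
`(F_X, 𝔣)`, sending `(K, 𝔨)` to `((K, 𝔨) ∘ (F_X, 𝔣), K(id_X))` and a 2-cell `ξ` to the
whiskering `ξ_{F_X}`. -/
noncomputable def precompFunctor :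
    PrimaryHom (pXphi P X φ) R ⥤ PointedHom P R X φ where
  obj K :=
    { M := (FXhom P X φ).compHom K
      c := constOf P X φ R K
      hc := by
        show (⊤ : R.obj (⊤_ D)) ≤ R.map (constOf P X φ R K)
          (K.app (CoKl.mk X X) ((FXhom P X φ).app X φ))
        rw [constOf, R.map_comp, ← K.naturality (idXc X) ((FXhom P X φ).app X φ),
          reindex_frak_top, K.app_top, R.map_top] }
  map {K₁ K₂} ξ := ⟨Functor.whiskerLeft (FX X) ξ.1,
    ⟨fun A α => ξ.2 (CoKl.mk X A) ((FXhom P X φ).app A α),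
     by
      show constOf P X φ R K₁ ≫ ξ.1.app (CoKl.mk X X) = constOf P X φ R K₂
      rw [constOf, constOf, Category.assoc, ξ.1.naturality (idXc X),
        ← Category.assoc]
      congr 1
      exact (termObj P X φ R K₂).hom_ext _ _⟩⟩
  map_id K := Subtype.ext rfl
  map_comp ξ η := Subtype.ext rfl

end Precomp


section Inverse

variable {C : Type u} [Category.{v} C] [HasFiniteProducts C]
  {P : PrimaryDoctrine.{w} C} {X : C} {φ : P.obj X}
  {D : Type u'} [Category.{v'} D] [HasFiniteProducts D]
  {R : PrimaryDoctrine.{w'} D}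

/-- The coKleisli morphism `A ⇝ X ⨯ A` given by the identity of `X ⨯ A`. -/
noncomputable def wA (X A : C) : CoKl.mk X A ⟶ CoKl.mk X (X ⨯ A) :=
  (𝟙 (X ⨯ A) : (X ⨯ A : C) ⟶ (X ⨯ A : C))

/-- The coKleisli morphism `A ⇝ X` given by `pr₁`. -/
noncomputable def fstCoKl (X A : C) : CoKl.mk X A ⟶ CoKl.mk X X :=
  (prod.fst : (X ⨯ (A : C)) ⟶ X)

/-- The coKleisli morphism `A ⇝ t`. -/
noncomputable def toTermCoKl (X A : C) : CoKl.mk X A ⟶ CoKl.mk X (⊤_ C) :=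
  (terminal.from (X ⨯ (A : C)) : (X ⨯ (A : C)) ⟶ (⊤_ C))

theorem wA_comp {X A B : C} (g : (X ⨯ A : C) ⟶ B) :
    wA X A ≫ (FX X).map g = (show CoKl.mk X A ⟶ CoKl.mk X B from g) := by
  show prod.lift prod.fst (𝟙 (X ⨯ A)) ≫ (prod.snd ≫ g) = g
  rw [← Category.assoc, prod.lift_snd, Category.id_comp]

theorem fstCoKl_eq (X A : C) : fstCoKl X A = toTermCoKl X A ≫ idXc X := by
  show prod.fst = prod.lift prod.fst (terminal.from _) ≫ prod.fst
  exact (prod.lift_fst _ _).symm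

theorem wA_snd (X A : C) : wA X A ≫ (FX X).map prod.snd = 𝟙 (CoKl.mk X A) := by
  show prod.lift prod.fst (𝟙 (X ⨯ A)) ≫ (prod.snd ≫ prod.snd) = prod.snd
  rw [← Category.assoc, prod.lift_snd, Category.id_comp]

theorem Khom_ext (K : PrimaryHom (pXphi P X φ) R) {A B : C} {Z : D}
    {m₁ m₂ : Z ⟶ K.G.obj (CoKl.mk X (A ⨯ B))}
    (h₁ : m₁ ≫ K.G.map ((FX X).map prod.fst) = m₂ ≫ K.G.map ((FX X).map prod.fst))
    (h₂ : m₁ ≫ K.G.map ((FX X).map prod.snd) = m₂ ≫ K.G.map ((FX X).map prod.snd)) :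
    m₁ = m₂ := by
  letI := K.pres
  have hl := isLimitOfPreserves K.G (CoKl.binaryFanIsLimit X A B)
  apply hl.hom_ext
  rintro ⟨j⟩
  cases j
  · exact h₁
  · exact h₂

theorem wA_fst_K (K : PrimaryHom (pXphi P X φ) R) (A : C) :
    K.G.map (wA X A) ≫ K.G.map ((FX X).map prod.fst)
      = terminal.from (K.G.obj (CoKl.mk X A)) ≫ constOf P X φ R K := by
  have e : wA X A ≫ (FX X).map prod.fst = toTermCoKl X A ≫ idXc X :=
    (wA_comp _).trans (fstCoKl_eq X A)
  refine (K.G.map_comp _ _).symm.trans ((congrArg K.G.map e).trans ?_)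
  refine (K.G.map_comp _ _).trans ?_
  rw [constOf, ← Category.assoc]
  rw [(termObj P X φ R K).hom_ext (K.G.map (toTermCoKl X A))
    (terminal.from _ ≫ (termObj P X φ R K).from (⊤_ D))]
  rfl

theorem wA_snd_K (K : PrimaryHom (pXphi P X φ) R) (A : C) :
    K.G.map (wA X A) ≫ K.G.map ((FX X).map prod.snd) = 𝟙 (K.G.obj (CoKl.mk X A)) :=
  (K.G.map_comp _ _).symm.trans ((congrArg K.G.map (wA_snd X A)).trans (K.G.map_id _))

theorem wA_naturality {K₁ K₂ : PrimaryHom (pXphi P X φ) R}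
    (θ : (FX X ⋙ K₁.G) ⟶ (FX X ⋙ K₂.G))
    (hcθ : constOf P X φ R K₁ ≫ θ.app X = constOf P X φ R K₂) (A : C) :
    K₁.G.map (wA X A) ≫ θ.app (X ⨯ A) = θ.app A ≫ K₂.G.map (wA X A) := by
  have nf := θ.naturality (prod.fst : (X ⨯ A : C) ⟶ X)
  have ns := θ.naturality (prod.snd : (X ⨯ A : C) ⟶ A)
  simp only [Functor.comp_map] at nf ns
  apply Khom_ext (R := R) K₂
  · refine (Category.assoc _ _ _).trans (Eq.trans ?_ (Category.assoc _ _ _).symm)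
    exact (congrArg (K₁.G.map (wA X A) ≫ ·) nf.symm).trans
      ((Category.assoc _ _ _).symm.trans
        ((congrArg (· ≫ θ.app X) (wA_fst_K (R := R) K₁ A)).trans
          ((Category.assoc _ _ _).trans
            ((congrArg (terminal.from (K₁.G.obj (CoKl.mk X A)) ≫ ·) hcθ).trans
              ((congrArg (· ≫ constOf P X φ R K₂)
                  (terminal.hom_ext (terminal.from (K₁.G.obj (CoKl.mk X A)))
                    (θ.app A ≫ terminal.from (K₂.G.obj (CoKl.mk X A))))).trans
                ((Category.assoc _ _ _).trans
                  (congrArg (θ.app A ≫ ·) (wA_fst_K (R := R) K₂ A).symm)))))))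
  · refine (Category.assoc _ _ _).trans (Eq.trans ?_ (Category.assoc _ _ _).symm)
    exact (congrArg (K₁.G.map (wA X A) ≫ ·) ns.symm).trans
      ((Category.assoc _ _ _).symm.trans
        ((congrArg (· ≫ θ.app A) (wA_snd_K (R := R) K₁ A)).trans
          ((Category.id_comp _).trans
            ((Category.comp_id _).symm.trans
              (congrArg (θ.app A ≫ ·) (wA_snd_K (R := R) K₂ A).symm)))))

theorem cokl_naturality {K₁ K₂ : PrimaryHom (pXphi P X φ) R}
    (θ : (FX X ⋙ K₁.G) ⟶ (FX X ⋙ K₂.G))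
    (hcθ : constOf P X φ R K₁ ≫ θ.app X = constOf P X φ R K₂) {A B : C}
    (g : CoKl.mk X A ⟶ CoKl.mk X B) :
    K₁.G.map g ≫ θ.app B = θ.app A ≫ K₂.G.map g := by
  have n := θ.naturality (show (X ⨯ A : C) ⟶ B from g)
  simp only [Functor.comp_map] at n
  have e1 : K₁.G.map g = K₁.G.map (wA X A) ≫ K₁.G.map ((FX X).map (show (X ⨯ A : C) ⟶ B from g)) :=
    (congrArg K₁.G.map (wA_comp (show (X ⨯ A : C) ⟶ B from g)).symm).trans (K₁.G.map_comp _ _)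
  have e2 : K₂.G.map g = K₂.G.map (wA X A) ≫ K₂.G.map ((FX X).map (show (X ⨯ A : C) ⟶ B from g)) :=
    (congrArg K₂.G.map (wA_comp (show (X ⨯ A : C) ⟶ B from g)).symm).trans (K₂.G.map_comp _ _)
  exact (congrArg (· ≫ θ.app B) e1).trans ((Category.assoc _ _ _).trans
    ((congrArg (K₁.G.map (wA X A) ≫ ·) n).trans ((Category.assoc _ _ _).symm.trans
      ((congrArg (· ≫ K₂.G.map ((FX X).map (show (X ⨯ A : C) ⟶ B from g)))
          (wA_naturality θ hcθ A)).trans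
        ((Category.assoc _ _ _).trans (congrArg (θ.app A ≫ ·) e2.symm))))))

theorem elem_eq (P : PrimaryDoctrine.{w} C) (X : C) (φ : P.obj X) (A : C)
    (α : (pXphi P X φ).obj (CoKl.mk X A)) :
    (pXphi P X φ).map (wA X A) ((FXhom P X φ).app (X ⨯ A) α.1) = α := by
  apply Subtype.ext
  show P.map (prod.lift prod.fst (𝟙 (X ⨯ A))) (P.frak φ (X ⨯ A) α.1) = α.1
  unfold PrimaryDoctrine.frak
  exact (by
    intro a ha
    rw [P.map_inf, ← P.map_comp, ← P.map_comp, prod.lift_fst, prod.lift_snd, P.map_id]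
    exact inf_eq_right.mpr ha : ∀ a : P.obj (X ⨯ A), a ≤ P.map prod.fst φ →
      P.map (prod.lift prod.fst (𝟙 (X ⨯ A))) (P.map prod.fst φ ⊓ P.map prod.snd a) = a) α.1 α.2

/-- The comparison map `G A ⟶ G (X ⨯ A)` induced by the constant `c`. -/
noncomputable def uMap (S : PointedHom P R X φ) (A : C) :
    S.M.G.obj A ⟶ S.M.G.obj (X ⨯ A) :=
  letI := S.M.pres
  prod.lift (terminal.from _ ≫ S.c) (𝟙 _) ≫ (PreservesLimitPair.iso S.M.G X A).inv

theorem uMap_fst (S : PointedHom P R X φ) (A : C) :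
    uMap S A ≫ S.M.G.map prod.fst = terminal.from (S.M.G.obj A) ≫ S.c := by
  letI := S.M.pres
  have h : (PreservesLimitPair.iso S.M.G X A).inv ≫ S.M.G.map prod.fst = prod.fst := by
    rw [Iso.inv_comp_eq, PreservesLimitPair.iso_hom, prodComparison_fst]
  rw [uMap, Category.assoc, h, prod.lift_fst]

theorem uMap_snd (S : PointedHom P R X φ) (A : C) :
    uMap S A ≫ S.M.G.map prod.snd = 𝟙 (S.M.G.obj A) := by
  letI := S.M.pres
  have h : (PreservesLimitPair.iso S.M.G X A).inv ≫ S.M.G.map prod.snd = prod.snd := by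
    rw [Iso.inv_comp_eq, PreservesLimitPair.iso_hom, prodComparison_snd]
  rw [uMap, Category.assoc, h, prod.lift_snd]

theorem Ghom_ext (S : PointedHom P R X φ) {A : C} {Z : D}
    {m₁ m₂ : Z ⟶ S.M.G.obj (X ⨯ A)}
    (h₁ : m₁ ≫ S.M.G.map prod.fst = m₂ ≫ S.M.G.map prod.fst)
    (h₂ : m₁ ≫ S.M.G.map prod.snd = m₂ ≫ S.M.G.map prod.snd) : m₁ = m₂ := by
  letI := S.M.pres
  have key : m₁ ≫ (PreservesLimitPair.iso S.M.G X A).hom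
      = m₂ ≫ (PreservesLimitPair.iso S.M.G X A).hom := by
    apply Limits.prod.hom_ext
    · rw [Category.assoc, Category.assoc, PreservesLimitPair.iso_hom, prodComparison_fst,
        h₁]
    · rw [Category.assoc, Category.assoc, PreservesLimitPair.iso_hom, prodComparison_snd,
        h₂]
  exact (cancel_mono (PreservesLimitPair.iso S.M.G X A).hom).mp key

theorem uMap_comp (S : PointedHom P R X φ) {A B : C} (g : (X ⨯ A : C) ⟶ B) :
    uMap S A ≫ S.M.G.map (prod.lift prod.fst g)
      = (uMap S A ≫ S.M.G.map g) ≫ uMap S B := by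
  apply Ghom_ext S
  · have l1 : (uMap S A ≫ S.M.G.map (prod.lift prod.fst g)) ≫ S.M.G.map prod.fst
        = terminal.from (S.M.G.obj A) ≫ S.c := by
      rw [Category.assoc, ← S.M.G.map_comp, prod.lift_fst, uMap_fst]
    have l2 : ((uMap S A ≫ S.M.G.map g) ≫ uMap S B) ≫ S.M.G.map prod.fst
        = terminal.from (S.M.G.obj A) ≫ S.c := by
      rw [Category.assoc, uMap_fst, ← Category.assoc, terminal.comp_from]
    rw [l1, l2]
  · rw [Category.assoc, ← S.M.G.map_comp, prod.lift_snd, Category.assoc, uMap_snd,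
      Category.comp_id]

theorem invHom_top_aux (S : PointedHom P R X φ) (A : C) :
    R.map (terminal.from (S.M.G.obj A)) (R.map S.c (S.M.app X φ)) = ⊤ :=
  le_antisymm le_top (by
    calc (⊤ : R.obj (S.M.G.obj A)) = R.map (terminal.from _) ⊤ := (R.map_top _).symm
      _ ≤ R.map (terminal.from _) (R.map S.c (S.M.app X φ)) := R.map_mono _ S.hc)

/-- The inverse functor on base categories: `CoKl C X ⥤ D` induced by a pointed hom. -/
noncomputable def invG (S : PointedHom P R X φ) : CoKl C X ⥤ D where
  obj A := S.M.G.obj (A : C)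
  map {A B} g := uMap S (A : C) ≫ S.M.G.map (show (X ⨯ (A : C)) ⟶ (B : C) from g)
  map_id A := by
    show uMap S (A : C) ≫ S.M.G.map prod.snd = 𝟙 _
    exact uMap_snd S (A : C)
  map_comp {A B E} g h := by
    show uMap S (A : C) ≫ S.M.G.map (prod.lift prod.fst (show (X ⨯ (A : C)) ⟶ (B : C) from g)
          ≫ (show (X ⨯ (B : C)) ⟶ (E : C) from h))
        = (uMap S (A : C) ≫ S.M.G.map (show (X ⨯ (A : C)) ⟶ (B : C) from g))
          ≫ (uMap S (B : C) ≫ S.M.G.map (show (X ⨯ (B : C)) ⟶ (E : C) from h))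
    exact (by
      intro A' B' E' g h
      rw [S.M.G.map_comp, ← Category.assoc, uMap_comp]
      simp only [Category.assoc] : ∀ {A' B' E' : C} (g : X ⨯ A' ⟶ B') (h : X ⨯ B' ⟶ E'),
        uMap S A' ≫ S.M.G.map (prod.lift prod.fst g ≫ h)
          = (uMap S A' ≫ S.M.G.map g) ≫ (uMap S B' ≫ S.M.G.map h)) g h

noncomputable def invGTerminal (S : PointedHom P R X φ) :
    IsTerminal ((invG S).obj (CoKl.mk X (⊤_ C))) :=
  letI := S.M.pres
  terminalIsTerminal.isTerminalObj S.M.G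

theorem invG_map_sndfst (S : PointedHom P R X φ) (A B : C) :
    (invG S).map (show CoKl.mk X (A ⨯ B) ⟶ CoKl.mk X A
        from (prod.snd ≫ prod.fst : X ⨯ (A ⨯ B) ⟶ A))
      = S.M.G.map prod.fst := by
  show uMap S (A ⨯ B) ≫ S.M.G.map (prod.snd ≫ prod.fst) = S.M.G.map prod.fst
  rw [S.M.G.map_comp, ← Category.assoc, uMap_snd, Category.id_comp]

theorem invG_map_sndsnd (S : PointedHom P R X φ) (A B : C) :
    (invG S).map (show CoKl.mk X (A ⨯ B) ⟶ CoKl.mk X B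
        from (prod.snd ≫ prod.snd : X ⨯ (A ⨯ B) ⟶ B))
      = S.M.G.map prod.snd := by
  show uMap S (A ⨯ B) ≫ S.M.G.map (prod.snd ≫ prod.snd) = S.M.G.map prod.snd
  rw [S.M.G.map_comp, ← Category.assoc, uMap_snd, Category.id_comp]

noncomputable def invGPres (S : PointedHom P R X φ) : PreservesFiniteProducts (invG S) := by
  letI := S.M.pres
  haveI hpair : ∀ A B : CoKl C X, PreservesLimit (pair A B) (invG S) := fun A B =>
    preservesLimit_of_preserves_limit_cone (CoKl.binaryFanIsLimit X (A : C) (B : C))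
      ((isLimitMapConeBinaryFanEquiv (invG S) _ _).symm
        (IsLimit.ofIsoLimit
          (isLimitOfHasBinaryProductOfPreservesLimit S.M.G (A : C) (B : C))
          (Cones.ext (Iso.refl _) (by
            rintro ⟨j⟩
            cases j
            · exact (invG_map_sndfst S (A : C) (B : C)).symm.trans
                (Category.id_comp _).symm
            · exact (invG_map_sndsnd S (A : C) (B : C)).symm.trans
                (Category.id_comp _).symm))))
  haveI : PreservesLimitsOfShape (Discrete WalkingPair) (invG S) :=
    ⟨fun {K} => preservesLimit_of_iso_diagram (invG S) (diagramIsoPair K).symm⟩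
  haveI : PreservesLimit (Functor.empty.{0} (CoKl C X)) (invG S) :=
    preservesLimit_of_preserves_limit_cone (CoKl.isTerminal X)
      ((isLimitMapConeEmptyConeEquiv (invG S) (CoKl.mk X (⊤_ C))).symm (invGTerminal S))
  haveI : PreservesLimitsOfShape (Discrete PEmpty.{1}) (invG S) :=
    preservesLimitsOfShape_pempty_of_preservesTerminal _
  exact PreservesFiniteProducts.of_preserves_binary_and_terminal (invG S)

/-- The inverse primary morphism `P_(X,φ) ⟶ R` induced by a pointed hom. -/
noncomputable def invHom (S : PointedHom P R X φ) : PrimaryHom (pXphi P X φ) R where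
  G := invG S
  pres := invGPres S
  app A α := R.map (uMap S (A : C)) (S.M.app (X ⨯ (A : C)) α.1)
  naturality {A B} g α := by
    show R.map (uMap S (A : C)) (S.M.app _
        (P.map (prod.lift prod.fst (show (X ⨯ (A : C)) ⟶ (B : C) from g)) α.1))
      = R.map (uMap S (A : C) ≫ S.M.G.map (show (X ⨯ (A : C)) ⟶ (B : C) from g))
          (R.map (uMap S (B : C)) (S.M.app _ α.1))
    exact (by
      intro A' B' g a
      rw [S.M.naturality, ← R.map_comp, uMap_comp, R.map_comp] :
      ∀ {A' B' : C} (g : X ⨯ A' ⟶ B') (a : P.obj (X ⨯ B')),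
        R.map (uMap S A') (S.M.app _ (P.map (prod.lift prod.fst g) a))
          = R.map (uMap S A' ≫ S.M.G.map g) (R.map (uMap S B') (S.M.app _ a))) g α.1
  app_inf A α β := by
    show R.map (uMap S (A : C)) (S.M.app _ (α.1 ⊓ β.1)) = _
    rw [S.M.app_inf, R.map_inf]
    rfl
  app_top A := by
    show R.map (uMap S (A : C)) (S.M.app _ (P.map prod.fst φ)) = ⊤
    exact (by
      intro A'
      rw [S.M.naturality, ← R.map_comp, uMap_fst, R.map_comp, invHom_top_aux] :
      ∀ A' : C, R.map (uMap S A') (S.M.app _ (P.map prod.fst φ)) = ⊤) A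

theorem constOf_invHom (S : PointedHom P R X φ) :
    constOf P X φ R (invHom S) = S.c := by
  show (termObj P X φ R (invHom S)).from (⊤_ D)
      ≫ (uMap S (⊤_ C) ≫ S.M.G.map prod.fst) = S.c
  erw [uMap_fst]
  exact ((Category.assoc _ _ _).symm.trans (congrArg (· ≫ S.c)
    (terminal.hom_ext
      ((termObj P X φ R (invHom S)).from (⊤_ D) ≫ terminal.from (S.M.G.obj (⊤_ C)))
      (𝟙 (⊤_ D))))).trans (Category.id_comp _)

theorem invHom_frak (S : PointedHom P R X φ) (A : C) (β : P.obj A) :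
    R.map (uMap S A) (S.M.app (X ⨯ A) (P.frak φ A β)) = S.M.app A β := by
  unfold PrimaryDoctrine.frak
  rw [S.M.app_inf, S.M.naturality, S.M.naturality, R.map_inf, ← R.map_comp, ← R.map_comp,
    uMap_fst, uMap_snd, R.map_comp, invHom_top_aux, R.map_id, top_inf_eq]

theorem invG_FX_map (S : PointedHom P R X φ) {A B : C} (f : A ⟶ B) :
    (invG S).map ((FX X).map f) = S.M.G.map f := by
  show uMap S A ≫ S.M.G.map (prod.snd ≫ f) = S.M.G.map f
  rw [S.M.G.map_comp, ← Category.assoc, uMap_snd, Category.id_comp]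

noncomputable def essIsoHomNat (S : PointedHom P R X φ) :
    ((FXhom P X φ).compHom (invHom S)).G ⟶ S.M.G where
  app A := 𝟙 (S.M.G.obj A)
  naturality {A B} f := by
    show (invG S).map ((FX X).map f) ≫ 𝟙 (S.M.G.obj B) = 𝟙 (S.M.G.obj A) ≫ S.M.G.map f
    rw [invG_FX_map]
    exact (Category.comp_id _).trans (Category.id_comp _).symm

noncomputable def essIsoInvNat (S : PointedHom P R X φ) :
    S.M.G ⟶ ((FXhom P X φ).compHom (invHom S)).G where
  app A := 𝟙 (S.M.G.obj A)
  naturality {A B} f := by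
    show S.M.G.map f ≫ 𝟙 (S.M.G.obj B) = 𝟙 (S.M.G.obj A) ≫ (invG S).map ((FX X).map f)
    erw [invG_FX_map]
    exact (Category.comp_id _).trans (Category.id_comp _).symm

/-- The canonical isomorphism `(precompFunctor).obj (invHom S) ≅ S` in `PD_(X,φ)(P,R)`. -/
noncomputable def essIso (S : PointedHom P R X φ) :
    (precompFunctor P X φ R).obj (invHom S) ≅ S where
  hom := ⟨essIsoHomNat S,
    ⟨fun A β => le_of_eq (show R.map (uMap S A) (S.M.app (X ⨯ A) (P.frak φ A β))
          = R.map (𝟙 (S.M.G.obj A)) (S.M.app A β) from by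
        rw [invHom_frak, R.map_id]),
     by
      show constOf P X φ R (invHom S) ≫ 𝟙 (S.M.G.obj X) = S.c
      exact (Category.comp_id _).trans (constOf_invHom S)⟩⟩
  inv := ⟨essIsoInvNat S,
    ⟨fun A β => le_of_eq (show S.M.app A β
          = R.map (𝟙 (S.M.G.obj A)) (R.map (uMap S A) (S.M.app (X ⨯ A) (P.frak φ A β)))
          from by rw [R.map_id, invHom_frak]),
     by
      show S.c ≫ 𝟙 (S.M.G.obj X) = constOf P X φ R (invHom S)
      exact (Category.comp_id _).trans (constOf_invHom S).symm⟩⟩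
  hom_inv_id := Subtype.ext (by
    apply NatTrans.ext
    funext A
    exact Category.comp_id (𝟙 (S.M.G.obj (A : C))))
  inv_hom_id := Subtype.ext (by
    apply NatTrans.ext
    funext A
    exact Category.comp_id (𝟙 (S.M.G.obj (A : C))))

end Inverse


/-- Precomposition with the universal arrow `(F_X, 𝔣) : P ⟶ P_(X,φ)`
induces an equivalence of categories `PD(P_(X,φ), R) ≃ PD_(X,φ)(P, R)` for every primary
doctrine `R`. -/
theorem precompFunctor_isEquivalence {C : Type u} [Category.{v} C] [HasFiniteProducts C]
    (P : PrimaryDoctrine.{w} C) (X : C) (φ : P.obj X)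
    {D : Type u'} [Category.{v'} D] [HasFiniteProducts D] (R : PrimaryDoctrine.{w'} D) :
    (precompFunctor P X φ R).IsEquivalence := by
  refine { faithful := ?_, full := ?_, essSurj := ?_ }
  · exact
      { map_injective := fun {K₁ K₂} ξ₁ ξ₂ h => by
          apply Subtype.ext
          apply NatTrans.ext
          funext A
          exact congrArg
            (fun (t : (precompFunctor P X φ R).obj K₁ ⟶ (precompFunctor P X φ R).obj K₂) =>
              t.1.app (A : C)) h }
  · exact
      { map_surjective := fun {K₁ K₂} θ => by
          refine ⟨⟨{ app := fun A => θ.1.app (A : C),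
                     naturality := fun {A B} g => cokl_naturality θ.1 θ.2.2 g },
                   fun A α => ?_⟩, ?_⟩
          · calc K₁.app (CoKl.mk X (A : C)) α
                = R.map (K₁.G.map (wA X (A : C)))
                    (K₁.app (CoKl.mk X (X ⨯ (A : C)))
                      ((FXhom P X φ).app (X ⨯ (A : C)) α.1)) := by
                  conv_lhs => rw [← elem_eq P X φ (A : C) α]
                  exact K₁.naturality (wA X (A : C)) ((FXhom P X φ).app (X ⨯ (A : C)) α.1)
              _ ≤ R.map (K₁.G.map (wA X (A : C)))
                    (R.map (θ.1.app (X ⨯ (A : C)))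
                      (K₂.app (CoKl.mk X (X ⨯ (A : C)))
                        ((FXhom P X φ).app (X ⨯ (A : C)) α.1))) :=
                  R.map_mono _ (θ.2.1 (X ⨯ (A : C)) α.1)
              _ = R.map (K₁.G.map (wA X (A : C)) ≫ θ.1.app (X ⨯ (A : C)))
                    (K₂.app (CoKl.mk X (X ⨯ (A : C)))
                      ((FXhom P X φ).app (X ⨯ (A : C)) α.1)) :=
                  (R.map_comp _ _ _).symm
              _ = (show R.obj (K₁.G.obj (CoKl.mk X (A : C))) from
                  R.map (θ.1.app (A : C) ≫ K₂.G.map (wA X (A : C)))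
                    (K₂.app (CoKl.mk X (X ⨯ (A : C)))
                      ((FXhom P X φ).app (X ⨯ (A : C)) α.1))) :=
                  congrArg (R.map · (K₂.app (CoKl.mk X (X ⨯ (A : C)))
                    ((FXhom P X φ).app (X ⨯ (A : C)) α.1))) (wA_naturality θ.1 θ.2.2 (A : C))
              _ = (show R.obj (K₁.G.obj (CoKl.mk X (A : C))) from
                  R.map (θ.1.app (A : C))
                    (R.map (K₂.G.map (wA X (A : C)))
                      (K₂.app (CoKl.mk X (X ⨯ (A : C)))
                        ((FXhom P X φ).app (X ⨯ (A : C)) α.1)))) :=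
                  R.map_comp _ _ _
              _ = (show R.obj (K₁.G.obj (CoKl.mk X (A : C))) from
                  R.map (θ.1.app (A : C)) (K₂.app A α)) :=
                  congrArg (R.map (θ.1.app (A : C)))
                    ((K₂.naturality (wA X (A : C)) ((FXhom P X φ).app (X ⨯ (A : C)) α.1)).symm.trans
                      (congrArg (K₂.app _) (elem_eq P X φ (A : C) α)))
          · exact Subtype.ext (NatTrans.ext (funext fun B => rfl)) }
  · exact { mem_essImage := fun S => ⟨invHom S, ⟨essIso S⟩⟩ }
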